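/- arXiv:1202.3598 — 2 statements merged into one kernel-verified Lean document; each statement's English description precedes it below -/
import Mathlib

section
/- Let V be a real vector space, Ric, g, T ∈ V, a ≠ 0 real, and k, Λ, κ ∈ ℝ. Suppose the f(R) field equation a • Ric - (b/2) • g = κ • T holds together with the condition ((k/2 - Λ) * a - b/2) • g + (a - 1) * κ • T = 0. Then the Einstein equation Ric - (k/2) • g + Λ • g = κ • T holds. -/
theorem stmt_2 (V : Type*) [AddCommGroup V] [Module ℝ V]
    (Ric g T : V) (k Λ κ a b : ℝ) (ha : a ≠ 0)
    (hf : a • Ric - (b / 2) • g = κ • T)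
    (hcond : ((k / 2 - Λ) * a - b / 2) • g + ((a - 1) * κ) • T = 0) :
    Ric - (k / 2) • g + Λ • g = κ • T := by
  refine smul_right_injective V ha ?_
  linear_combination (norm := module) hf - hcond
end

section
/- Let V be a real vector space with a linear functional tr, and g, Ric, T ∈ V with tr g = 4, tr Ric = k. Suppose both the Einstein equation Ric - (k/2) • g + Λ • g = κ • T and the f(R) equation a • Ric - (b/2) • g = κ • T hold (a = f'(k), b = f(k)). Then k*a - 2*b + k - 4*Λ = 0. -/
/-!
Both field equations have the same right-hand side `κ • T`, so their traces agree. With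
`tr g = 4` and `tr Ric = k`, the Einstein side traces to `4Λ - k` and the `f(R)` side to
`k f'(k) - 2 f(k)`; equating them is the compatibility condition.
-/

section FieldEquationTraces

variable {V : Type*} [AddCommGroup V] [Module ℝ V] (tr : V →ₗ[ℝ] ℝ) {g Ric : V} {n k : ℝ}

theorem trace_einstein_side (htrg : tr g = n) (htrR : tr Ric = k) (Λ : ℝ) :
    tr (Ric - (k / 2) • g + Λ • g) = k - n * k / 2 + n * Λ := by
  simp only [map_add, map_sub, map_smul, smul_eq_mul, htrg, htrR]
  ring

theorem trace_fR_side (htrg : tr g = n) (htrR : tr Ric = k) (a b : ℝ) :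
    tr (a • Ric - (b / 2) • g) = a * k - n * b / 2 := by
  simp only [map_sub, map_smul, smul_eq_mul, htrg, htrR]
  ring

end FieldEquationTraces

theorem stmt_6 (V : Type*) [AddCommGroup V] [Module ℝ V]
    (tr : V →ₗ[ℝ] ℝ) (g Ric T : V) (k Λ κ a b : ℝ)
    (htrg : tr g = 4) (htrR : tr Ric = k)
    (hE : Ric - (k / 2) • g + Λ • g = κ • T)
    (hf : a • Ric - (b / 2) • g = κ • T) :
    k * a - 2 * b + k - 4 * Λ = 0 := by
  have hEinstein := trace_einstein_side tr htrg htrR Λ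
  have hfR := trace_fR_side tr htrg htrR a b
  rw [hE] at hEinstein
  rw [hf] at hfR
  linarith
end
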